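/- For every integer m ≥ 0, the position sequence Of^{2,m} of squares of length 2f_m equals the Fibonacci word F(R_a, R_b) over the two blocks R_a = [1, 2, …, f_{m−1}−1, 0, 0, …, 0] (the increasing run 1,…,f_{m−1}−1 followed by f_m+1 zeros, so |R_a| = f_{m+1}) and R_b = [1, 2, …, f_m] (so |R_b| = f_m). -/

import Mathlib

/-!
Since `F = σ^{m+1}(F)`, the Fibonacci word is the concatenation of the blocks
`σ^{m+1}(a) = Fw (m + 1)` and `σ^{m+1}(b) = Fw m`, and every block is a prefix of `F`.
The prefix of `F` of length `f_{m+2} - 2` has period `f_m`, so a window of length `2 f_m`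
starting at offset `r` of a block is the square of the `r`-th conjugate of `Fw m`, unless the
block is an `a`-block and `r ≥ f_{m-1} - 1`: then the window covers the last letters of both
`Fw (m + 1)` and `Fw (m + 2)`, which are swapped, and it is no square at all. The conjugates of
`Fw m` are pairwise distinct, since `Fw m` has `f_{m-2}` letters `b` and `gcd (f_{m-2}, f_m) = 1`,
and the reference windows `1, …, f_m` run through the conjugates `0, …, f_m - 1` in order.
So the window at offset `r` is the reference window `r + 1`, or no square, as the `r`-th letter
of `R_a` or `R_b` says.
-/

/-- Fibonacci numbers: `fn 0 = 1`, `fn 1 = 2`, `fn (m+2) = fn (m+1) + fn m`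
(so `fn m` is the paper's `f_m`; also `f_{m-1} = Nat.fib (m+1)` etc.). -/
def fn (m : ℕ) : ℕ := Nat.fib (m + 2)

/-- Finite Fibonacci words `Fw m = σ^m(a)` for the morphism σ(a)=ab, σ(b)=a,
with `a := false`, `b := true`; equivalently `Fw (m+2) = Fw (m+1) ++ Fw m`. -/
def Fw : ℕ → List Bool
  | 0 => [false]
  | 1 => [false, true]
  | m + 2 => Fw (m + 1) ++ Fw m

/-- The infinite Fibonacci word (0-indexed): the fixed point of σ beginning with `a`. -/
def fibWord (i : ℕ) : Bool := (Fw (i + 1)).getD i false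

/-- `fFactor i n = F[i;n]`, the factor of length `n` of the Fibonacci word
beginning at (1-indexed) position `i`. -/
def fFactor (i n : ℕ) : List Bool := (List.range n).map fun t => fibWord (i - 1 + t)

/-- `w` occurs as a factor of the infinite Fibonacci word. -/
def IsFactorF (w : List Bool) : Prop := ∃ i : ℕ, 1 ≤ i ∧ w = fFactor i w.length

/-- `D2 i n`: the number of distinct squares occurring as factors of `F[i;n]`. -/
noncomputable def D2 (i n : ℕ) : ℕ :=
  {w : List Bool | w ≠ [] ∧ (w ++ w) <:+: fFactor i n}.ncard

/-- The first `N` blocks of `F(R_a,R_b)`: the Fibonacci word with each letter `a`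
replaced by the block `R_a` and each `b` by `R_b`. -/
def substBlocks {α : Type*} (Ra Rb : List α) (N : ℕ) : List α :=
  ((List.range N).map fun t => if fibWord t = false then Ra else Rb).flatten

/-- The `i`-th letter (0-indexed) of the infinite word `F(R_a,R_b)`,
with default `d` (irrelevant when `R_a`, `R_b` are nonempty). -/
def substLetter {α : Type*} (Ra Rb : List α) (d : α) (i : ℕ) : α :=
  (substBlocks Ra Rb (i + 1)).getD i d

open Classical in
/-- `Of2 m i`: the position sequence of squares of length `2f_m` (1-indexed in `i`):
it equals `j` if `F[i;2f_m] = F[j;2f_m]` for some `1 ≤ j ≤ f_{m-1}-1`, equals `j` if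
`F[i;2f_m] = F[f_{m+1}+j;2f_m]` for some `f_{m-1} ≤ j ≤ f_m`, and `0` otherwise. -/
noncomputable def Of2 (m i : ℕ) : ℕ :=
  if h : ∃ j, 1 ≤ j ∧ j ≤ Nat.fib (m + 1) - 1 ∧
      fFactor i (2 * fn m) = fFactor j (2 * fn m) then h.choose
  else if h' : ∃ j, Nat.fib (m + 1) ≤ j ∧ j ≤ fn m ∧
      fFactor i (2 * fn m) = fFactor (fn (m + 1) + j) (2 * fn m) then h'.choose
  else 0


open Function

theorem Function.Periodic.nat_gcd {α : Type*} {f : ℕ → α} {a b : ℕ} (ha : Periodic f a)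
    (hb : Periodic f b) : Periodic f (a.gcd b) := by
  have iterate_shift : ∀ c, (fun (g : ℕ → α) y => g (y + 1))^[c] f = fun y => f (y + c) := by
    intro c
    induction c with
    | zero => rfl
    | succ c ih =>
      rw [iterate_succ_apply', ih]
      funext y
      exact congrArg f (by omega)
  have periodic_iff :
      ∀ c, Periodic f c ↔ IsPeriodicPt (fun (g : ℕ → α) y => g (y + 1)) c f := by
    intro c
    rw [IsPeriodicPt, IsFixedPt, iterate_shift, funext_iff]
    rfl
  exact (periodic_iff _).2 (((periodic_iff a).1 ha).gcd ((periodic_iff b).1 hb))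

theorem Nat.count_congr_of_lt {p q : ℕ → Prop} [DecidablePred p] [DecidablePred q] {n : ℕ}
    (h : ∀ y < n, p y ↔ q y) : Nat.count p n = Nat.count q n := by
  simp only [Nat.count_eq_card_filter_range]
  exact congrArg Finset.card (Finset.filter_congr fun y hy => h y (Finset.mem_range.1 hy))

theorem Nat.count_mul_of_periodic {p : ℕ → Prop} [DecidablePred p] {a : ℕ} (hp : Periodic p a)
    (e : ℕ) : Nat.count p (a * e) = e * Nat.count p a := by
  induction e with
  | zero => simp
  | succ e ih =>
    have hshift : Nat.count (fun y => p (a * e + y)) a = Nat.count p a :=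
      Nat.count_congr_of_lt fun y _ => by
        rw [add_comm, mul_comm, ← Nat.cast_id e, hp.nat_mul e y]
    rw [Nat.mul_succ, Nat.count_add, ih, hshift]
    ring

theorem Nat.dvd_of_periodic_of_coprime_count {p : ℕ → Prop} [DecidablePred p] {n d : ℕ}
    (hn : Periodic p n) (hd : Periodic p d) (hcop : (Nat.count p n).Coprime n) : n ∣ d := by
  have hgn : d.gcd n * (n / d.gcd n) = n := Nat.mul_div_cancel' (Nat.gcd_dvd_right d n)
  have hcount : Nat.count p n = n / d.gcd n * Nat.count p (d.gcd n) := by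
    conv_lhs => rw [← hgn]
    exact Nat.count_mul_of_periodic (hd.nat_gcd hn) _
  have hquot : n / d.gcd n = 1 := Nat.eq_one_of_dvd_coprimes hcop (Dvd.intro _ hcount.symm)
    (Nat.div_dvd_of_dvd (Nat.gcd_dvd_right d n))
  rw [hquot, mul_one] at hgn
  exact hgn ▸ Nat.gcd_dvd_left d n

theorem List.length_flatten_map_range {α : Type*} (f : ℕ → List α) (N : ℕ) :
    ((List.range N).map f).flatten.length = ∑ s ∈ Finset.range N, (f s).length := by
  induction N with
  | zero => simp
  | succ N ih => simp [List.range_succ, Finset.sum_range_succ, ih]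

theorem List.getElem?_flatten_map_range {α : Type*} {f : ℕ → List α} {len : ℕ → ℕ}
    (hf : ∀ s, (f s).length = len s) {N t r : ℕ} (ht : t < N) (hr : r < len t) :
    ((List.range N).map f).flatten[(∑ s ∈ Finset.range t, len s) + r]? = (f t)[r]? := by
  induction N with
  | zero => omega
  | succ N ih =>
    have hlen : ((List.range N).map f).flatten.length = ∑ s ∈ Finset.range N, len s := by
      simp only [List.length_flatten_map_range, hf]
    rw [List.range_succ, List.map_append, List.flatten_append]
    rcases Nat.lt_succ_iff_lt_or_eq.1 ht with ht | rfl
    · have hsub : ∑ s ∈ Finset.range (t + 1), len s ≤ ∑ s ∈ Finset.range N, len s :=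
        Finset.sum_le_sum_of_subset (Finset.range_subset_range.2 ht)
      rw [Finset.sum_range_succ] at hsub
      rw [List.getElem?_append_left (by omega), ih ht]
    · rw [List.getElem?_append_right (by omega), hlen]
      simp

theorem fn_add_two (k : ℕ) : fn (k + 2) = fn (k + 1) + fn k :=
  Nat.fib_add_two.trans (add_comm _ _)

theorem fn_succ (k : ℕ) : fn (k + 1) = fn k + Nat.fib (k + 1) :=
  Nat.fib_add_two.trans (add_comm _ _)

theorem fn_pos (k : ℕ) : 0 < fn k := Nat.fib_pos.2 (by omega)

theorem two_le_fn_succ (k : ℕ) : 2 ≤ fn (k + 1) :=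
  Nat.fib_mono (show 3 ≤ k + 1 + 2 by omega)

theorem lt_fn (k : ℕ) : k < fn k := by
  induction k with
  | zero => exact fn_pos 0
  | succ k ih => have := fn_succ k; have := Nat.fib_pos.2 (by omega : 0 < k + 1); omega

theorem Fw_length (k : ℕ) : (Fw k).length = fn k := by
  induction k using Nat.twoStepInduction with
  | zero => rfl
  | one => rfl
  | more k ih ih' => simp [Fw, fn_add_two, ih, ih']

theorem Fw_prefix_of_le {k l : ℕ} (h : k ≤ l) : Fw k <+: Fw l := by
  induction l, h using Nat.le_induction with
  | base => exact List.prefix_refl _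
  | succ l _ ih =>
    refine ih.trans ?_
    match l with
    | 0 => exact ⟨[true], rfl⟩
    | l + 1 => exact ⟨Fw l, rfl⟩

theorem Fw_eq_map_range (k : ℕ) : Fw k = (List.range (fn k)).map fibWord := by
  refine List.ext_getElem (by simp [Fw_length]) fun i hi _ => ?_
  have hi' : i < (Fw (i + 1)).length := by have := lt_fn (i + 1); rw [Fw_length]; omega
  rw [List.getElem_map, List.getElem_range, fibWord, List.getD_eq_getElem _ _ hi',
    (Fw_prefix_of_le (show k ≤ k + i + 1 by omega)).getElem,
    (Fw_prefix_of_le (show i + 1 ≤ k + i + 1 by omega)).getElem]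

theorem Fw_getElem? {k i : ℕ} (h : i < fn k) : (Fw k)[i]? = some (fibWord i) := by
  simp [Fw_eq_map_range, h]

theorem fibWord_eq_of_Fw_getElem? {k i : ℕ} {c : Bool} (h : (Fw k)[i]? = some c) :
    fibWord i = c := by
  obtain ⟨hi, -⟩ := List.getElem?_eq_some_iff.1 h
  rw [Fw_length] at hi
  simpa [Fw_getElem? hi] using h

theorem fibWord_fn_succ_add {k s : ℕ} (h : s < fn k) : fibWord (fn (k + 1) + s) = fibWord s :=
  fibWord_eq_of_Fw_getElem? (k := k + 2) <| by
    rw [show Fw (k + 2) = Fw (k + 1) ++ Fw k from rfl,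
      List.getElem?_append_right (by rw [Fw_length]; omega), Fw_length, Nat.add_sub_cancel_left,
      Fw_getElem? h]

theorem fibWord_fn_add {k s : ℕ} (h : s + 2 < fn (k + 1)) : fibWord (fn k + s) = fibWord s := by
  induction k generalizing s with
  | zero => exact absurd h (by change ¬s + 2 < 2; omega)
  | succ k ih =>
    rcases Nat.lt_or_ge s (fn k) with hs | hs
    · exact fibWord_fn_succ_add hs
    · obtain ⟨v, rfl⟩ := Nat.exists_eq_add_of_le hs
      have : fn (k + 1 + 1) = fn (k + 1) + fn k := fn_add_two k
      rw [← add_assoc, ← fn_add_two, fibWord_fn_succ_add (by omega), ih (by omega)]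

theorem fibWord_mod_fn {k u : ℕ} (h : u + 3 ≤ fn (k + 2)) : fibWord (u % fn k) = fibWord u := by
  induction u using Nat.strong_induction_on with
  | _ u ih =>
    rcases Nat.lt_or_ge u (fn k) with hu | hu
    · rw [Nat.mod_eq_of_lt hu]
    · obtain ⟨v, rfl⟩ := Nat.exists_eq_add_of_le hu
      have := fn_add_two k
      have := fn_pos k
      rw [Nat.add_mod_left, ih v (by omega) (by omega), fibWord_fn_add (by omega)]

theorem fibWord_fn_sub_ne {j : ℕ} (hj1 : 1 ≤ j) (hj2 : j ≤ 2) (k : ℕ) :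
    fibWord (fn (k + 2) - j) ≠ fibWord (fn (k + 1) - j) := by
  induction k with
  | zero => interval_cases j <;> decide
  | succ k ih =>
    have := two_le_fn_succ k
    have : fn (k + 1 + 2) = fn (k + 2) + fn (k + 1) := fn_add_two (k + 1)
    rw [show fn (k + 1 + 2) - j = fn (k + 2) + (fn (k + 1) - j) by omega,
      fibWord_fn_succ_add (by omega)]
    exact ih.symm

theorem count_fibWord (k : ℕ) : Nat.count (fun y => fibWord y = true) (fn k) = Nat.fib k := by
  induction k using Nat.twoStepInduction with
  | zero => decide
  | one => decide
  | more k ih ih' =>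
    have hshift : Nat.count (fun y => fibWord (fn (k + 1) + y) = true) (fn k) =
        Nat.count (fun y => fibWord y = true) (fn k) :=
      Nat.count_congr_of_lt fun y hy => by rw [fibWord_fn_succ_add hy]
    rw [fn_add_two, Nat.count_add, hshift, ih, ih', Nat.fib_add_two, add_comm]

/-- `block m c = σ^{m+1}(c)`, writing `false` for `a` and `true` for `b`. -/
def block (m : ℕ) (c : Bool) : List Bool := if c then Fw m else Fw (m + 1)

def blockLen (m t : ℕ) : ℕ := if fibWord t then fn m else fn (m + 1)

def blockStart (m t : ℕ) : ℕ := ∑ s ∈ Finset.range t, blockLen m s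

theorem length_block_fibWord (m t : ℕ) : (block m (fibWord t)).length = blockLen m t := by
  unfold block blockLen
  split <;> exact Fw_length _

theorem block_getElem? {m r : ℕ} {c : Bool} (hr : r < (block m c).length) :
    (block m c)[r]? = some (fibWord r) := by
  cases c <;> simp only [block, Bool.false_eq_true, if_true, if_false, Fw_length] at hr ⊢ <;>
    exact Fw_getElem? hr

theorem Fw_succ_add_eq_flatten (m n : ℕ) : Fw (m + 1 + n) = ((Fw n).map (block m)).flatten := by
  induction n using Nat.twoStepInduction with
  | zero => simp [block, Fw]
  | one => simp [block, Fw]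
  | more n ih ih' =>
    show Fw (m + 1 + (n + 1)) ++ Fw (m + 1 + n) = ((Fw (n + 1) ++ Fw n).map (block m)).flatten
    rw [ih', ih, List.map_append, List.flatten_append]

theorem fn_le_blockLen (m t : ℕ) : fn m ≤ blockLen m t := by
  have := fn_succ m
  unfold blockLen
  split <;> omega

theorem blockLen_pos (m t : ℕ) : 0 < blockLen m t := (fn_pos m).trans_le (fn_le_blockLen m t)

theorem blockStart_succ (m t : ℕ) : blockStart m (t + 1) = blockStart m t + blockLen m t :=
  Finset.sum_range_succ _ _

theorem le_blockStart (m t : ℕ) : t ≤ blockStart m t := by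
  induction t with
  | zero => exact le_rfl
  | succ t ih => have := blockLen_pos m t; rw [blockStart_succ]; omega

theorem exists_eq_blockStart_add (m x : ℕ) :
    ∃ t r, r < blockLen m t ∧ x = blockStart m t + r := by
  induction x with
  | zero => exact ⟨0, 0, blockLen_pos m 0, rfl⟩
  | succ x ih =>
    obtain ⟨t, r, hr, rfl⟩ := ih
    rcases Nat.lt_or_ge (r + 1) (blockLen m t) with h | h
    · exact ⟨t, r + 1, h, rfl⟩
    · exact ⟨t + 1, 0, blockLen_pos m (t + 1), by rw [blockStart_succ]; omega⟩

theorem fibWord_blockStart_add {m t r : ℕ} (hr : r < blockLen m t) :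
    fibWord (blockStart m t + r) = fibWord r := by
  have h := List.getElem?_flatten_map_range (length_block_fibWord m) (lt_fn t) hr
  have hblocks : (List.range (fn t)).map (fun s => block m (fibWord s)) = (Fw t).map (block m) := by
    rw [Fw_eq_map_range, List.map_map]
    rfl
  rw [hblocks, ← Fw_succ_add_eq_flatten] at h
  rw [← length_block_fibWord] at hr
  exact fibWord_eq_of_Fw_getElem? (h.trans (block_getElem? hr))

theorem fibWord_succ_eq_false_of_eq_true {t : ℕ} (h : fibWord t = true) :
    fibWord (t + 1) = false := by
  -- In the factorisation of `F` into `σ(a) = ab` and `σ(b) = a`, every `b` ends a block `ab`.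
  obtain ⟨t', r, hr, rfl⟩ := exists_eq_blockStart_add 0 t
  rw [fibWord_blockStart_add hr] at h
  have hlen : blockLen 0 t' ≤ 2 := by unfold blockLen; split <;> decide
  obtain rfl : r = 1 := by
    rcases (show r = 0 ∨ r = 1 by omega) with rfl | rfl
    · exact absurd h (by decide)
    · rfl
  have ht' : fibWord t' = false := by
    cases ht' : fibWord t'
    · rfl
    · simp [blockLen, ht', fn] at hr
  rw [show blockStart 0 t' + 1 + 1 = blockStart 0 (t' + 1) + 0 by
    rw [blockStart_succ, blockLen, ht']; rfl, fibWord_blockStart_add (blockLen_pos 0 _)]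
  rfl

theorem fibWord_blockStart_add_of_false {m t u : ℕ} (ht : fibWord t = false)
    (hu : u < fn (m + 2)) : fibWord (blockStart m t + u) = fibWord u := by
  have hlen : blockLen m t = fn (m + 1) := by simp [blockLen, ht]
  rcases Nat.lt_or_ge u (fn (m + 1)) with h | h
  · exact fibWord_blockStart_add (hlen ▸ h)
  · obtain ⟨v, rfl⟩ := Nat.exists_eq_add_of_le h
    have hv : v < fn m := by have := fn_add_two m; omega
    have := fn_le_blockLen m (t + 1)
    rw [← add_assoc, ← hlen, ← blockStart_succ, fibWord_blockStart_add (by omega),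
      hlen, fibWord_fn_succ_add hv]

theorem fibWord_blockStart_add_eq_mod_of_false {m t u : ℕ} (ht : fibWord t = false)
    (hu : u + 3 ≤ fn (m + 2)) : fibWord (blockStart m t + u) = fibWord (u % fn m) := by
  rw [fibWord_mod_fn hu, fibWord_blockStart_add_of_false ht (by omega)]

theorem fibWord_blockStart_add_eq_mod_of_true {m t u : ℕ} (ht : fibWord t = true)
    (hu : u + 3 ≤ fn m + fn (m + 2)) : fibWord (blockStart m t + u) = fibWord (u % fn m) := by
  have hlen : blockLen m t = fn m := by simp [blockLen, ht]
  rcases Nat.lt_or_ge u (fn m) with h | h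
  · rw [Nat.mod_eq_of_lt h, fibWord_blockStart_add (hlen ▸ h)]
  · obtain ⟨v, rfl⟩ := Nat.exists_eq_add_of_le h
    rw [← add_assoc, ← hlen, ← blockStart_succ, hlen, Nat.add_mod_left,
      fibWord_blockStart_add_eq_mod_of_false (fibWord_succ_eq_false_of_eq_true ht) (by omega)]

/-- The square of the conjugate `(Fw m).rotate r`. -/
def conjSquare (m r : ℕ) : List Bool :=
  (List.range (2 * fn m)).map fun s => fibWord ((r + s) % fn m)

theorem fFactor_eq_conjSquare_iff {m i r : ℕ} :
    fFactor i (2 * fn m) = conjSquare m r ↔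
      ∀ s < 2 * fn m, fibWord (i - 1 + s) = fibWord ((r + s) % fn m) := by
  simp [fFactor, conjSquare, List.map_inj_left]

theorem conjSquare_injOn {m p q : ℕ} (hp : p < fn m) (hq : q < fn m)
    (h : conjSquare m p = conjSquare m q) : p = q := by
  wlog hpq : p ≤ q generalizing p q
  · exact (this hq hp h.symm (by omega)).symm
  set n := fn m
  have hpos : 0 < n := fn_pos m
  have hrot : ∀ s < 2 * n, fibWord ((p + s) % n) = fibWord ((q + s) % n) := by
    simpa [conjSquare, List.map_inj_left] using h
  let P : ℕ → Prop := fun y => fibWord (y % n) = true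
  have hn : Function.Periodic P n := fun y => by simp [P]
  have hd : Function.Periodic P (q - p) := fun y => by
    have := hrot ((y + n - p) % n) (by have := Nat.mod_lt (y + n - p) hpos; omega)
    rw [Nat.add_mod_mod, Nat.add_mod_mod, show p + (y + n - p) = y + n by omega,
      show q + (y + n - p) = y + (q - p) + n by omega, Nat.add_mod_right, Nat.add_mod_right] at this
    simp only [P, this]
  have hcount : Nat.count P n = Nat.fib m := by
    rw [← count_fibWord]
    exact Nat.count_congr_of_lt fun y hy => by simp [P, Nat.mod_eq_of_lt hy]
  have hcop : (Nat.count P n).Coprime n := by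
    rw [hcount, show n = Nat.fib (m + 1) + Nat.fib m from Nat.fib_add_two.trans (add_comm _ _),
      Nat.coprime_add_self_right]
    exact Nat.fib_coprime_fib_succ m
  have := Nat.eq_zero_of_dvd_of_lt (Nat.dvd_of_periodic_of_coprime_count hn hd hcop) (by omega)
  omega

theorem fFactor_blockStart_add_eq_conjSquare {m t r : ℕ} (hr : r < blockLen m t)
    (ha : fibWord t = false → r + 2 ≤ Nat.fib (m + 1)) :
    fFactor (blockStart m t + r + 1) (2 * fn m) = conjSquare m r := by
  have := fn_succ m
  have := fn_add_two m
  have := Nat.fib_pos.2 (by omega : 0 < m + 1)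
  refine fFactor_eq_conjSquare_iff.2 fun s hs => ?_
  rw [Nat.add_sub_cancel, add_assoc]
  cases ht : fibWord t
  · have := ha ht
    exact fibWord_blockStart_add_eq_mod_of_false ht (by omega)
  · have : blockLen m t = fn m := by simp [blockLen, ht]
    exact fibWord_blockStart_add_eq_mod_of_true ht (by omega)

theorem fFactor_blockStart_add_ne_conjSquare {m t r : ℕ} (ht : fibWord t = false)
    (hr1 : Nat.fib (m + 1) ≤ r + 1) (hr2 : r < fn (m + 1)) (r' : ℕ) :
    fFactor (blockStart m t + r + 1) (2 * fn m) ≠ conjSquare m r' := by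
  have := fn_succ m
  have := fn_add_two m
  have : Nat.fib (m + 1) ≤ fn m := Nat.fib_le_fib_succ
  have mismatch : ∀ j, 1 ≤ j → j ≤ 2 → Nat.fib (m + 1) < r + j → r + j ≤ fn (m + 1) →
      fFactor (blockStart m t + r + 1) (2 * fn m) ≠ conjSquare m r' := by
    intro j hj1 hj2 hrj hrj' h
    -- Compare the `j`-th last letters of `Fw (m + 1)` and `Fw (m + 2)`: they lie `f_m` apart.
    have hsq := fFactor_eq_conjSquare_iff.1 h
    have h1 := hsq (fn (m + 1) - j - r) (by omega)
    have h2 := hsq (fn (m + 2) - j - r) (by omega)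
    rw [show r' + (fn (m + 2) - j - r) = r' + (fn (m + 1) - j - r) + fn m by omega,
      Nat.add_mod_right, ← h1, Nat.add_sub_cancel,
      show blockStart m t + r + (fn (m + 2) - j - r) = blockStart m t + (fn (m + 2) - j) by omega,
      show blockStart m t + r + (fn (m + 1) - j - r) = blockStart m t + (fn (m + 1) - j) by omega,
      fibWord_blockStart_add_of_false ht (by omega),
      fibWord_blockStart_add_of_false ht (by omega)] at h2
    exact fibWord_fn_sub_ne hj1 hj2 m h2
  rcases Nat.lt_or_ge (r + 2) (fn (m + 1) + 1) with h | h
  · exact mismatch 2 (by omega) le_rfl (by omega) (by omega)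
  · exact mismatch 1 le_rfl (by omega) (by omega) (by omega)

theorem fFactor_eq_conjSquare_of_le_fib {m j : ℕ} (hj1 : 1 ≤ j)
    (hj2 : j ≤ Nat.fib (m + 1) - 1) :
    fFactor j (2 * fn m) = conjSquare m (j - 1) := by
  have ha : fibWord 0 = false := rfl
  have := fFactor_blockStart_add_eq_conjSquare (m := m) (t := 0) (r := j - 1)
    (by have := fn_succ m; simp [blockLen, ha]; omega) (fun _ => by omega)
  rwa [show blockStart m 0 + (j - 1) + 1 = j by simp [blockStart]; omega] at this

theorem fFactor_fn_succ_add_eq_conjSquare {m j : ℕ} (hj1 : Nat.fib (m + 1) ≤ j)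
    (hj2 : j ≤ fn m) :
    fFactor (fn (m + 1) + j) (2 * fn m) = conjSquare m (j - 1) := by
  have ha : fibWord 0 = false := rfl
  have hb : fibWord 1 = true := rfl
  have := Nat.fib_pos.2 (by omega : 0 < m + 1)
  have := fFactor_blockStart_add_eq_conjSquare (m := m) (t := 1) (r := j - 1)
    (by simp [blockLen, hb]; omega) (fun h => by simp [hb] at h)
  rwa [show blockStart m 1 + (j - 1) + 1 = fn (m + 1) + j by
    simp [blockStart, blockLen, ha]; omega] at this

theorem Of2_eq_of_fFactor_eq_conjSquare {m i r : ℕ} (hr : r < fn m)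
    (h : fFactor i (2 * fn m) = conjSquare m r) : Of2 m i = r + 1 := by
  have hfib : Nat.fib (m + 1) ≤ fn m := Nat.fib_le_fib_succ
  have := Nat.fib_pos.2 (by omega : 0 < m + 1)
  unfold Of2
  split_ifs with hlow hhigh
  · obtain ⟨hj1, hj2, hj⟩ := hlow.choose_spec
    have := conjSquare_injOn hr (by omega)
      (h.symm.trans (hj.trans (fFactor_eq_conjSquare_of_le_fib hj1 hj2)))
    omega
  · obtain ⟨hj1, hj2, hj⟩ := hhigh.choose_spec
    have := conjSquare_injOn hr (by omega)
      (h.symm.trans (hj.trans (fFactor_fn_succ_add_eq_conjSquare hj1 hj2)))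
    omega
  · rcases Nat.lt_or_ge (r + 1) (Nat.fib (m + 1)) with hr' | hr'
    · exact (hlow ⟨r + 1, by omega, by omega,
        h.trans (fFactor_eq_conjSquare_of_le_fib (j := r + 1) (by omega) (by omega)).symm⟩).elim
    · exact (hhigh ⟨r + 1, hr', by omega,
        h.trans (fFactor_fn_succ_add_eq_conjSquare hr' (by omega)).symm⟩).elim

theorem Of2_eq_zero_of_forall_ne_conjSquare {m i : ℕ}
    (h : ∀ r, fFactor i (2 * fn m) ≠ conjSquare m r) : Of2 m i = 0 := by
  unfold Of2
  rw [dif_neg, dif_neg]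
  · rintro ⟨j, hj1, hj2, hj⟩
    exact h _ (hj.trans (fFactor_fn_succ_add_eq_conjSquare hj1 hj2))
  · rintro ⟨j, hj1, hj2, hj⟩
    exact h _ (hj.trans (fFactor_eq_conjSquare_of_le_fib hj1 hj2))

theorem substLetter_blockStart_add {α : Type*} {Ra Rb : List α} {m t r : ℕ} (d : α)
    (hRa : Ra.length = fn (m + 1)) (hRb : Rb.length = fn m) (hr : r < blockLen m t) :
    substLetter Ra Rb d (blockStart m t + r) = (if fibWord t = false then Ra else Rb).getD r d := by
  have hlen : ∀ s, (if fibWord s = false then Ra else Rb).length = blockLen m s := fun s => by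
    unfold blockLen
    cases fibWord s <;> simp [hRa, hRb]
  have ht : t < blockStart m t + r + 1 := by have := le_blockStart m t; omega
  simp only [substLetter, substBlocks, List.getD_eq_getElem?_getD]
  exact congrArg (Option.getD · d) (List.getElem?_flatten_map_range hlen ht hr)

theorem getD_map_succ_range_append_replicate (a b r : ℕ) :
    ((List.range a).map (· + 1) ++ List.replicate b 0).getD r 0 = if r < a then r + 1 else 0 := by
  rw [List.getD_eq_getElem?_getD]
  by_cases h : r < a
  · rw [List.getElem?_append_left (by simpa using h)]
    simp [h]
  · rw [List.getElem?_append_right (by simpa using h), List.getElem?_replicate]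
    split_ifs <;> rfl

/-- The position sequence of squares of length `2f_m` is the Fibonacci word over the
blocks `R_a = [1,…,f_{m-1}-1,0,…,0]` (with `f_m + 1` zeros) and `R_b = [1,…,f_m]`. -/
theorem position_sequence_of_squares (m i : ℕ) (hi : 1 ≤ i) :
    Of2 m i =
      substLetter
        ((List.range (Nat.fib (m + 1) - 1)).map (· + 1) ++ List.replicate (fn m + 1) 0)
        ((List.range (fn m)).map (· + 1)) 0 (i - 1) := by
  obtain ⟨t, r, hr, hit⟩ := exists_eq_blockStart_add m (i - 1)
  obtain rfl : i = blockStart m t + r + 1 := by omega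
  have := fn_succ m
  have := Nat.fib_pos.2 (by omega : 0 < m + 1)
  have : Nat.fib (m + 1) ≤ fn m := Nat.fib_le_fib_succ
  rw [Nat.add_sub_cancel, substLetter_blockStart_add 0 ?_ ?_ hr]
  · cases ht : fibWord t
    · have hr' : r < fn (m + 1) := by simpa [blockLen, ht] using hr
      rw [if_pos rfl, getD_map_succ_range_append_replicate]
      split_ifs
      · exact Of2_eq_of_fFactor_eq_conjSquare (by omega)
          (fFactor_blockStart_add_eq_conjSquare hr fun _ => by omega)
      · exact Of2_eq_zero_of_forall_ne_conjSquare
          (fFactor_blockStart_add_ne_conjSquare ht (by omega) hr')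
    · have hr' : r < fn m := by simpa [blockLen, ht] using hr
      rw [Of2_eq_of_fFactor_eq_conjSquare hr'
        (fFactor_blockStart_add_eq_conjSquare hr fun h => by simp [ht] at h)]
      simp [List.getD_eq_getElem?_getD, hr']
  · simp; omega
  · simp
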